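/- arXiv:2204.07273 — 2 statements merged into one kernel-verified Lean document; each statement's English description precedes it below -/
import Mathlib

section
/- Let M1 and M2 be distinct primes and let q1, q2, q2', r be positive integers with gcd(q2, q1·M1·M2) = 1, gcd(q2', q1·M1·M2) = 1, gcd(q1·r, M1·M2) = 1, and gcd(q2·q2', n1·r) = 1, where n1 is a positive integer dividing q1·r. Let m, m' be integers and let ε, δ ∈ {+1, −1}. Define 𝒞2(0) = (n1/(q2·q2'·q1·r)) · Σ_{v (mod q2·q2'·q1·r/n1)} 𝔅(n1, ε·v, δ·m; q1·q2) · conj(𝔅(n1, ε·v, δ·m'; q1·q2')). If q2 ≠ q2', then 𝒞2(0) = 0. -/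
/-!
Expanding both `𝔅`-sums turns `𝒞₂(0)` into a linear combination of sums over `v < L` of
`e(ε v a / N) · conj e(ε v b / N')`, where `N = q₁ q₂ r / n₁` and `N' = q₁ q₂' r / n₁` both
divide `L = q₁ q₂ q₂' r / n₁` and `a`, `b` are units. Each such sum is a full geometric sum of
the `L`-th root of unity `e(ε (a / N - b / N'))`, which is not `1`: two reduced fractions with
denominators `N ≠ N'` never differ by an integer. So every inner sum vanishes.
-/

open Finset

/-- `eR x = exp(2πi·x)`. -/
noncomputable def eR (x : ℝ) : ℂ := Complex.exp (2 * Real.pi * Complex.I * x)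

/-- `eZMod c x = e(x/c)` for a residue `x` mod `c`. -/
noncomputable def eZMod (c : ℕ) (x : ZMod c) : ℂ := eR ((x.val : ℝ) / c)

/-- Kloosterman sum `S(a, b; c)`. -/
noncomputable def kloos (a b : ℤ) (c : ℕ) : ℂ :=
  ∑ d ∈ (Finset.range c).filter (fun d => Nat.Coprime d c),
    eZMod c ((a : ZMod c) * (d : ZMod c) + (b : ZMod c) * ((d : ZMod c))⁻¹)

/-- Normalized Kloosterman sum `Kl2(n; p)`. -/
noncomputable def Kl2 (p : ℕ) (n : ZMod p) : ℂ :=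
  ((1 / Real.sqrt p : ℝ) : ℂ) *
    ∑ x1 ∈ Finset.range p, ∑ x2 ∈ Finset.range p,
      if (x1 : ZMod p) * (x2 : ZMod p) = n then eR (((x1 : ℝ) + (x2 : ℝ)) / p) else 0

/-- Gauss sum `τ(χ)` of a Dirichlet character mod `q`. -/
noncomputable def gauss (q : ℕ) (χ : DirichletCharacter ℂ q) : ℂ :=
  ∑ a ∈ Finset.range q, χ (a : ZMod q) * eZMod q (a : ZMod q)

/-- The sum `L_{α,β}(v; p)` attached to a Dirichlet character mod `p`. -/
noncomputable def Lab (p : ℕ) (χ : DirichletCharacter ℂ p) (α β v : ZMod p) : ℂ :=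
  ((1 / Real.sqrt p : ℝ) : ℂ) *
    ∑ b ∈ Finset.range p,
      if Nat.Coprime (((b : ZMod p) + β * v).val) p
      then (starRingEnd ℂ) (χ (b : ZMod p)) * eZMod p (α * ((b : ZMod p) + β * v)⁻¹)
      else 0

/-- The character sum `𝔅(n1, n2, m; q)` (with parameters `r, M1, M2`). -/
noncomputable def frakB (r M1 M2 n1 : ℕ) (n2 m : ℤ) (q : ℕ) : ℂ :=
  ∑ d ∈ q.divisors, (d : ℂ) * ((ArithmeticFunction.moebius (q / d) : ℤ) : ℂ) *
    ∑ u ∈ (Finset.range (q * r / n1)).filter (fun u => Nat.Coprime u (q * r / n1)),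
      if (m : ZMod d) = ((M2 ^ 2 * n1 * u : ℕ) : ZMod d)
      then eZMod (q * r / n1)
        ((n2 : ZMod (q * r / n1)) * ((M1 : ZMod (q * r / n1)) * (u : ZMod (q * r / n1)))⁻¹)
      else 0

/-- The character sum `𝔇(n1, n2, m, q; M1)` (with parameters `r, M2, χ1`). -/
noncomputable def frakD (M1 M2 q r n1 : ℕ) (χ1 : DirichletCharacter ℂ M1) (n2 m : ℤ) : ℂ :=
  ∑ a ∈ (Finset.range M1).filter (fun a => Nat.Coprime a M1),
    Lab M1 χ1 ((m : ZMod M1) * ((q : ZMod M1) * (M2 : ZMod M1))⁻¹) (M2 : ZMod M1) (a : ZMod M1) *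
    Kl2 M1 (-(r : ZMod M1) * (n2 : ZMod M1) *
      ((a : ZMod M1) * (((q * r / n1 : ℕ)) : ZMod M1) ^ 2)⁻¹)


open Complex ComplexConjugate
open scoped Real

lemma eZMod_eq_stdAddChar {c : ℕ} [NeZero c] (x : ZMod c) : eZMod c x = ZMod.stdAddChar x := by
  rw [eZMod, eR, ZMod.stdAddChar_apply, ZMod.toCircle_apply]
  push_cast
  ring_nf

lemma eZMod_intCast_mul {c : ℕ} [NeZero c] (k : ℤ) (a : ZMod c) :
    eZMod c (k * a) = cexp (2 * π * I * (k * a.val / c)) := by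
  conv_lhs => rw [← ZMod.natCast_zmod_val a, ← Int.cast_natCast a.val, ← Int.cast_mul]
  rw [eZMod_eq_stdAddChar, ZMod.stdAddChar_coe]
  push_cast
  ring_nf

lemma conj_eZMod {c : ℕ} [NeZero c] (x : ZMod c) : conj (eZMod c x) = eZMod c (-x) := by
  rw [eZMod_eq_stdAddChar, eZMod_eq_stdAddChar, AddChar.map_neg_eq_conj]

lemma sum_range_cexp_eq_zero {θ : ℂ} {L : ℕ} (hθ : ∀ n : ℤ, θ ≠ n) (hLθ : ∃ n : ℤ, L * θ = n) :
    ∑ v ∈ range L, cexp (2 * π * I * (θ * v)) = 0 := by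
  have hw : cexp (2 * π * I * θ) ≠ 1 := by
    rw [Ne, Complex.exp_eq_one_iff]
    rintro ⟨n, hn⟩
    exact hθ n (mul_left_cancel₀ two_pi_I_ne_zero (by rw [hn]; ring))
  have hwL : cexp (2 * π * I * θ) ^ L = 1 := by
    obtain ⟨n, hn⟩ := hLθ
    rw [← Complex.exp_nat_mul, Complex.exp_eq_one_iff]
    exact ⟨n, by rw [← hn]; ring⟩
  simp_rw [show ∀ v : ℕ, 2 * π * I * (θ * v) = v * (2 * π * I * θ) by intro v; ring,
    Complex.exp_nat_mul]
  rw [geom_sum_eq hw, hwL, sub_self, zero_div]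

lemma natCast_div_sub_natCast_div_ne_intCast {A B N₁ N₂ : ℕ} [NeZero N₁] [NeZero N₂]
    (hA : A.Coprime N₁) (hB : B.Coprime N₂) (hN : N₁ ≠ N₂) (n : ℤ) :
    (A / N₁ - B / N₂ : ℂ) ≠ n := by
  intro h
  rw [div_sub_div _ _ (NeZero.ne _) (NeZero.ne _), div_eq_iff (mul_ne_zero (NeZero.ne _)
    (NeZero.ne _))] at h
  have hcross : (A : ℤ) * N₂ - B * N₁ = n * N₁ * N₂ := by
    have : (((A : ℤ) * N₂ - B * N₁ : ℤ) : ℂ) = (n * N₁ * N₂ : ℤ) := by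
      push_cast
      linear_combination h
    exact_mod_cast this
  have h₁ : N₁ ∣ A * N₂ := by
    refine Int.natCast_dvd_natCast.mp ⟨B + n * N₂, ?_⟩
    push_cast
    linear_combination hcross
  have h₂ : N₂ ∣ B * N₁ := by
    refine Int.natCast_dvd_natCast.mp ⟨A - n * N₁, ?_⟩
    push_cast
    linear_combination -hcross
  exact hN (Nat.dvd_antisymm (hA.symm.dvd_of_dvd_mul_left h₁) (hB.symm.dvd_of_dvd_mul_left h₂))

lemma ZMod.val_coprime_of_isUnit {n : ℕ} [NeZero n] {a : ZMod n} (ha : IsUnit a) :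
    a.val.Coprime n :=
  (ZMod.isUnit_iff_coprime _ _).mp (by rwa [ZMod.natCast_zmod_val])

lemma ZMod.isUnit_inv_natCast_mul {N a b : ℕ} (ha : a.Coprime N) (hb : b.Coprime N) :
    IsUnit ((a : ZMod N) * b)⁻¹ := by
  obtain ⟨u, hu⟩ :=
    ((ZMod.isUnit_iff_coprime a N).mpr ha).mul ((ZMod.isUnit_iff_coprime b N).mpr hb)
  rw [← hu, ZMod.inv_coe_unit]
  exact Units.isUnit _

lemma sum_range_eZMod_mul_conj_eq_zero {N₁ N₂ L : ℕ} (hN : N₁ ≠ N₂) (h₁ : N₁ ∣ L) (h₂ : N₂ ∣ L)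
    {a : ZMod N₁} {b : ZMod N₂} (ha : IsUnit a) (hb : IsUnit b) {ε : ℤ} (hε : IsUnit ε) :
    ∑ v ∈ range L,
      eZMod N₁ ((ε * v : ℤ) * a) * conj (eZMod N₂ ((ε * v : ℤ) * b)) = 0 := by
  rcases Nat.eq_zero_or_pos L with rfl | hL
  · simp
  obtain ⟨k₁, rfl⟩ := h₁
  obtain ⟨k₂, hk₂⟩ := h₂
  have : NeZero N₁ := ⟨left_ne_zero_of_mul hL.ne'⟩
  have : NeZero N₂ := ⟨left_ne_zero_of_mul (hk₂ ▸ hL.ne')⟩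
  set θ : ℂ := ε * (a.val / N₁ - b.val / N₂)
  have hterm (v : ℕ) : eZMod N₁ ((ε * v : ℤ) * a) * conj (eZMod N₂ ((ε * v : ℤ) * b)) =
      cexp (2 * π * I * (θ * v)) := by
    rw [conj_eZMod, ← neg_mul, ← Int.cast_neg, eZMod_intCast_mul, eZMod_intCast_mul,
      ← Complex.exp_add]
    simp only [θ]
    push_cast
    ring_nf
  simp_rw [hterm]
  apply sum_range_cexp_eq_zero
  · intro n hn
    refine natCast_div_sub_natCast_div_ne_intCast (ZMod.val_coprime_of_isUnit ha)
      (ZMod.val_coprime_of_isUnit hb) hN (ε * n) ?_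
    have hεε : (ε : ℂ) * ε = 1 := by exact_mod_cast Int.isUnit_mul_self hε
    push_cast
    linear_combination (ε : ℂ) * hn - (a.val / N₁ - b.val / N₂ : ℂ) * hεε
  · refine ⟨ε * (k₁ * a.val - k₂ * b.val), ?_⟩
    have e₁ : ((N₁ * k₁ : ℕ) : ℂ) * (a.val / N₁) = k₁ * a.val := by
      push_cast
      field_simp [NeZero.ne (N₁ : ℂ)]
    have e₂ : ((N₁ * k₁ : ℕ) : ℂ) * (b.val / N₂) = k₂ * b.val := by
      rw [hk₂]
      push_cast
      field_simp [NeZero.ne (N₂ : ℂ)]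
    simp only [θ]
    push_cast at e₁ e₂ ⊢
    linear_combination (ε : ℂ) * e₁ - (ε : ℂ) * e₂

lemma sum_mul_conj_sum_eq_zero {R α ι κ : Type*} [CommSemiring R] [StarRing R] {S : Finset α}
    {s : Finset ι} {t : Finset κ} (c : ι → R) (c' : κ → R) {f : ι → α → R} {g : κ → α → R}
    (h : ∀ i ∈ s, ∀ j ∈ t, ∑ v ∈ S, f i v * conj (g j v) = 0) :
    ∑ v ∈ S, (∑ i ∈ s, c i * f i v) * conj (∑ j ∈ t, c' j * g j v) = 0 := by
  calc _ = ∑ i ∈ s, ∑ j ∈ t, c i * conj (c' j) * ∑ v ∈ S, f i v * conj (g j v) := by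
        simp_rw [map_sum, map_mul, sum_mul_sum, mul_sum]
        rw [sum_comm]
        refine sum_congr rfl fun i _ => ?_
        rw [sum_comm]
        exact sum_congr rfl fun j _ => sum_congr rfl fun v _ => by ring
    _ = 0 := sum_eq_zero fun i hi => sum_eq_zero fun j hj => by
        rw [h i hi j hj, mul_zero]

lemma frakB_eq_sum_product (r M1 M2 n1 : ℕ) (n2 m : ℤ) (q : ℕ) :
    frakB r M1 M2 n1 n2 m q =
      ∑ p ∈ q.divisors ×ˢ (range (q * r / n1)).filter (fun u => Nat.Coprime u (q * r / n1)),
        (if (m : ZMod p.1) = ((M2 ^ 2 * n1 * p.2 : ℕ) : ZMod p.1)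
          then (p.1 : ℂ) * ((ArithmeticFunction.moebius (q / p.1) : ℤ) : ℂ) else 0) *
        eZMod (q * r / n1) ((n2 : ZMod (q * r / n1)) *
          ((M1 : ZMod (q * r / n1)) * (p.2 : ZMod (q * r / n1)))⁻¹) := by
  rw [frakB, sum_product]
  refine sum_congr rfl fun d _ => ?_
  rw [mul_sum]
  refine sum_congr rfl fun u _ => ?_
  split_ifs <;> simp

theorem zero_frequency_vanishes_general
    (M1 M2 : ℕ)
    (q1 q2 q2' r n1 : ℕ)
    (h1 : Nat.Coprime q2 (q1 * M1 * M2)) (h2 : Nat.Coprime q2' (q1 * M1 * M2))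
    (h3 : Nat.Coprime (q1 * r) (M1 * M2)) (hn1dvd : n1 ∣ q1 * r)
    (m m' ε δ : ℤ) (hε : ε = 1 ∨ ε = -1)
    (hne : q2 ≠ q2') :
    ((n1 : ℂ) / ((q2 : ℂ) * q2' * q1 * r)) *
      ∑ v ∈ Finset.range (q2 * q2' * q1 * r / n1),
        frakB r M1 M2 n1 (ε * v) (δ * m) (q1 * q2) *
          (starRingEnd ℂ) (frakB r M1 M2 n1 (ε * v) (δ * m') (q1 * q2'))
    = 0 := by
  set K := q1 * r / n1
  have hN (q : ℕ) : q1 * q * r / n1 = q * K := by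
    rw [show q1 * q * r = q * (q1 * r) by ring, Nat.mul_div_assoc _ hn1dvd]
  have hL : q2 * q2' * q1 * r / n1 = q2 * q2' * K := by
    rw [mul_assoc (q2 * q2'), Nat.mul_div_assoc _ hn1dvd]
  rcases Nat.eq_zero_or_pos K with hK | hK
  · simp [hL, hK]
  have hM1K : M1.Coprime K := (Nat.Coprime.coprime_dvd_left (Nat.div_dvd_of_dvd hn1dvd)
    (h3.coprime_dvd_right (dvd_mul_right M1 M2))).symm
  have hM1N {q : ℕ} (hq : q.Coprime (q1 * M1 * M2)) : M1.Coprime (q1 * q * r / n1) := by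
    rw [hN]
    exact (hq.coprime_dvd_right ((dvd_mul_left M1 q1).mul_right M2)).symm.mul_right hM1K
  refine mul_eq_zero_of_right _ ?_
  simp only [frakB_eq_sum_product]
  refine sum_mul_conj_sum_eq_zero _ _ fun p hp p' hp' => ?_
  refine sum_range_eZMod_mul_conj_eq_zero ?_ ?_ ?_
    (ZMod.isUnit_inv_natCast_mul (hM1N h1) (mem_filter.mp (mem_product.mp hp).2).2)
    (ZMod.isUnit_inv_natCast_mul (hM1N h2) (mem_filter.mp (mem_product.mp hp').2).2)
    (Int.isUnit_iff.mpr hε)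
  · rw [hN, hN]
    exact fun h => hne (Nat.eq_of_mul_eq_mul_right hK h)
  · rw [hN, hL]
    exact Dvd.intro q2' (by ring)
  · rw [hN, hL]
    exact Dvd.intro_left q2 (by ring)

/-- the zero-frequency sum `𝒞2(0)` vanishes unless `q2 = q2'`. -/
theorem zero_frequency_vanishes
    (M1 M2 : ℕ) (hM1 : M1.Prime) (hM2 : M2.Prime) (hMM : M1 ≠ M2)
    (q1 q2 q2' r n1 : ℕ) (hq1 : 0 < q1) (hq2 : 0 < q2) (hq2' : 0 < q2')
    (hr : 0 < r) (hn1 : 0 < n1)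
    (h1 : Nat.Coprime q2 (q1 * M1 * M2)) (h2 : Nat.Coprime q2' (q1 * M1 * M2))
    (h3 : Nat.Coprime (q1 * r) (M1 * M2)) (hn1dvd : n1 ∣ q1 * r)
    (h4 : Nat.Coprime (q2 * q2') (n1 * r))
    (m m' ε δ : ℤ) (hε : ε = 1 ∨ ε = -1) (hδ : δ = 1 ∨ δ = -1)
    (hne : q2 ≠ q2') :
    ((n1 : ℂ) / ((q2 : ℂ) * q2' * q1 * r)) *
      ∑ v ∈ Finset.range (q2 * q2' * q1 * r / n1),
        frakB r M1 M2 n1 (ε * v) (δ * m) (q1 * q2) *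
          (starRingEnd ℂ) (frakB r M1 M2 n1 (ε * v) (δ * m') (q1 * q2'))
    = 0 :=
  zero_frequency_vanishes_general M1 M2 q1 q2 q2' r n1 h1 h2 h3 hn1dvd m m' ε δ hε hne
end

section
/- Let p be a prime, let χ1 be a nontrivial Dirichlet character modulo p, and let α, β be integers with p ∤ α·β. Then for every integer v, L_{α,β}(v; p) = (1/τ(χ1)) · Σ_{c (mod p)} χ1(c) · Kl2(α·c; p) · e(−β·c·v/p), where χ1(c) = 0 when p | c. -/
open Finset

/-! Since `p` is prime, the nontrivial character `χ1` is primitive, so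
`conj (χ1 b) · τ(χ1) = Σ_c χ1(c) e(bc/p)` holds for every `b`, including `b ≡ 0`.
Inserting this into `L_{α,β}(v; p)`, substituting `x = b + βv` and swapping the sums gives
`Σ_c χ1(c) e(-βcv/p) Σ_{x ≠ 0} e((cx + α/x)/p)`, and for `c ≠ 0` the inner sum is
`√p · Kl2(αc; p)` via the parametrisation `x1 = cx`, `x2 = α/x` of `x1 x2 = αc`. -/

namespace ZMod

lemma sum_range_natCast {M : Type*} [AddCommMonoid M] (N : ℕ) [NeZero N] (f : ZMod N → M) :
    ∑ b ∈ range N, f b = ∑ x : ZMod N, f x :=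
  sum_nbij' (↑) val (fun _ _ => mem_univ _) (fun x _ => mem_range.mpr x.val_lt)
    (fun _ hb => val_cast_of_lt (mem_range.mp hb)) (fun x _ => natCast_zmod_val x)
    (fun _ _ => rfl)

end ZMod

open ZMod

section StdAddChar

variable {N : ℕ} [NeZero N]

lemma eR_natCast_div (n : ℕ) : eR (n / N) = stdAddChar (n : ZMod N) := by
  rw [stdAddChar_apply, toCircle_natCast, eR]
  push_cast
  ring_nf

lemma eZMod_eq_stdAddChar_s10 (x : ZMod N) : eZMod N x = stdAddChar x := by
  rw [eZMod, eR_natCast_div, natCast_zmod_val]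

lemma gauss_eq_gaussSum (χ : DirichletCharacter ℂ N) : gauss N χ = gaussSum χ stdAddChar := by
  rw [gauss, sum_range_natCast N (fun x => χ x * eZMod N x)]
  simp only [eZMod_eq_stdAddChar_s10, gaussSum]

lemma Kl2_eq_sum_stdAddChar (n : ZMod N) :
    Kl2 N n = ((1 / √N : ℝ) : ℂ) *
      ∑ x₁ : ZMod N, ∑ x₂ : ZMod N, if x₁ * x₂ = n then stdAddChar (x₁ + x₂) else 0 := by
  have h (x₁ x₂ : ℕ) : eR ((x₁ + x₂ : ℝ) / N) = stdAddChar ((x₁ : ZMod N) + (x₂ : ZMod N)) := by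
    exact_mod_cast eR_natCast_div (x₁ + x₂)
  rw [Kl2, ← sum_range_natCast]
  refine congrArg _ (sum_congr rfl fun x₁ _ => ?_)
  rw [← sum_range_natCast]
  exact sum_congr rfl fun x₂ _ => by rw [h]

end StdAddChar

lemma Fintype.sum_sum_ite_mul_eq_mul {F M : Type*} [Field F] [Fintype F] [DecidableEq F]
    [AddCommMonoid M] {a c : F} (ha : a ≠ 0) (hc : c ≠ 0) (f : F → F → M) :
    ∑ x₁, ∑ x₂, (if x₁ * x₂ = a * c then f x₁ x₂ else 0) = ∑ y ∈ {0}ᶜ, f (c * y) (a * y⁻¹) := by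
  have fiber (x₁ : F) : ∑ x₂, (if x₁ * x₂ = a * c then f x₁ x₂ else 0) =
      if x₁ ≠ 0 then f x₁ (a * c / x₁) else 0 := by
    rcases eq_or_ne x₁ 0 with rfl | hx₁
    · simp [eq_comm (a := (0 : F)), ha, hc]
    · simp only [ne_eq, hx₁, not_false_eq_true, if_true, mul_comm x₁, ← eq_div_iff hx₁,
        sum_ite_eq']
  simp only [fiber, compl_singleton, ← filter_ne', sum_filter]
  refine (Fintype.sum_equiv (Equiv.mulLeft₀ c hc) _ _ fun y => ?_).symm
  rcases eq_or_ne y 0 with rfl | hy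
  · simp
  · rw [Equiv.mulLeft₀_apply, if_pos hy, if_pos (mul_ne_zero hc hy)]
    congr 1
    field_simp

namespace DirichletCharacter

lemma isPrimitive_of_ne_one {R : Type*} [CommMonoidWithZero R] {p : ℕ} [Fact p.Prime]
    {χ : DirichletCharacter R p} (hχ : χ ≠ 1) : χ.IsPrimitive :=
  ((Nat.dvd_prime Fact.out).mp χ.conductor_dvd_level).resolve_left
    (mt eq_one_iff_conductor_eq_one.mpr hχ)

end DirichletCharacter

section PrimeModulus

variable {p : ℕ} [Fact p.Prime]

local notation "ψ" => stdAddChar (N := p)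

lemma Lab_eq_sum_stdAddChar (χ : DirichletCharacter ℂ p) (α β v : ZMod p) :
    Lab p χ α β v =
      ((1 / √p : ℝ) : ℂ) * ∑ x ∈ {0}ᶜ, χ⁻¹ (x - β * v) * ψ (α * x⁻¹) := by
  have coprime_iff (x : ZMod p) : Nat.Coprime x.val p ↔ x ≠ 0 := by
    rw [Nat.coprime_comm, Nat.Prime.coprime_iff_not_dvd Fact.out, ← natCast_eq_zero_iff,
      natCast_zmod_val]
  rw [Lab, sum_range_natCast p (fun b => if Nat.Coprime (b + β * v).val p
    then starRingEnd ℂ (χ b) * eZMod p (α * (b + β * v)⁻¹) else 0)]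
  simp only [coprime_iff, eZMod_eq_stdAddChar_s10, starRingEnd_apply, MulChar.star_apply',
    compl_singleton, ← filter_ne', sum_filter]
  exact congrArg _ (Fintype.sum_equiv (Equiv.addRight (β * v)) _ _ fun b => by simp)

lemma gaussSum_mul_sum_shift {χ : DirichletCharacter ℂ p} (hχ : χ ≠ 1) {a : ZMod p} (ha : a ≠ 0)
    (s : ZMod p) :
    gaussSum χ ψ * ∑ x ∈ {0}ᶜ, χ⁻¹ (x - s) * ψ (a * x⁻¹) =
      ∑ c, χ c * (∑ x₁, ∑ x₂, if x₁ * x₂ = a * c then ψ (x₁ + x₂) else 0) * ψ (-(s * c)) := by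
  have expand (b : ZMod p) : χ⁻¹ b * gaussSum χ ψ = ∑ c, χ c * ψ (b * c) := by
    rw [← gaussSum_mulShift_of_isPrimitive _ (DirichletCharacter.isPrimitive_of_ne_one hχ)]
    rfl
  have kloosterman (c : ZMod p) : χ c * ∑ x ∈ {0}ᶜ, ψ (c * x + a * x⁻¹) =
      χ c * ∑ x₁, ∑ x₂, if x₁ * x₂ = a * c then ψ (x₁ + x₂) else 0 := by
    rcases eq_or_ne c 0 with rfl | hc
    · rw [MulChar.map_nonunit χ not_isUnit_zero, zero_mul, zero_mul]
    · rw [Fintype.sum_sum_ite_mul_eq_mul ha hc]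
  calc gaussSum χ ψ * ∑ x ∈ {0}ᶜ, χ⁻¹ (x - s) * ψ (a * x⁻¹)
      = ∑ x ∈ {0}ᶜ, ∑ c, χ c * ψ ((x - s) * c) * ψ (a * x⁻¹) := by
        rw [mul_comm, sum_mul]
        refine sum_congr rfl fun x _ => ?_
        rw [mul_right_comm, expand, sum_mul]
    _ = ∑ c, χ c * (∑ x ∈ {0}ᶜ, ψ (c * x + a * x⁻¹)) * ψ (-(s * c)) := by
        rw [sum_comm]
        refine sum_congr rfl fun c _ => ?_
        rw [mul_sum, sum_mul]
        refine sum_congr rfl fun x _ => ?_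
        rw [mul_assoc, ← AddChar.map_add_eq_mul, mul_assoc, mul_comm (ψ _),
          ← AddChar.map_add_eq_mul]
        congr 2
        ring
    _ = _ := by simp only [kloosterman]

lemma gaussSum_mul_Lab {χ : DirichletCharacter ℂ p} (hχ : χ ≠ 1) {α : ZMod p} (hα : α ≠ 0)
    (β v : ZMod p) :
    gaussSum χ ψ * Lab p χ α β v = ∑ c, χ c * Kl2 p (α * c) * ψ (-β * c * v) := by
  rw [Lab_eq_sum_stdAddChar, mul_left_comm, gaussSum_mul_sum_shift hχ hα, mul_sum]
  refine sum_congr rfl fun c _ => ?_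
  rw [Kl2_eq_sum_stdAddChar, show -β * c * v = -(β * v * c) by ring]
  ring

end PrimeModulus

/-- expansion of `L_{α,β}(v; p)` in terms of Kloosterman sums. -/
theorem Lab_expansion
    (p : ℕ) (hp : p.Prime) (χ1 : DirichletCharacter ℂ p) (hχ1 : χ1 ≠ 1)
    (α β : ℤ) (hαβ : ¬ ((p : ℤ) ∣ α * β)) (v : ℤ) :
    Lab p χ1 (α : ZMod p) (β : ZMod p) (v : ZMod p)
    = (1 / gauss p χ1) *
        ∑ c ∈ Finset.range p,
          χ1 (c : ZMod p) * Kl2 p ((α : ZMod p) * (c : ZMod p)) *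
            eZMod p (-(β : ZMod p) * (c : ZMod p) * (v : ZMod p)) := by
  have := Fact.mk hp
  have hα : (α : ZMod p) ≠ 0 := fun h =>
    hαβ (((intCast_zmod_eq_zero_iff_dvd α p).mp h).mul_right β)
  have hG : gaussSum χ1 stdAddChar ≠ 0 :=
    gaussSum_ne_zero_of_nontrivial (by simp [hp.ne_zero]) hχ1 (isPrimitive_stdAddChar p)
  rw [gauss_eq_gaussSum, sum_range_natCast p
    (fun c => χ1 c * Kl2 p (α * c) * eZMod p (-β * c * v))]
  simp only [eZMod_eq_stdAddChar_s10, ← gaussSum_mul_Lab hχ1 hα]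
  field_simp
end
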